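/- arXiv:1511.01038 — 3 statements merged into one kernel-verified Lean document; each statement's English description precedes it below -/
import Mathlib

section
/- For every finite full binary tree t with L leaves, the sum over all internal (non-leaf) nodes v of t of 2^(−depth(v)) is at most log₂ L, where the root has depth 0. -/
/-- A finite full binary tree: every node is either a leaf or has exactly two children. -/
inductive FullBinTree : Type
  | leaf : FullBinTree
  | node : FullBinTree → FullBinTree → FullBinTree

/-- The multiset of depths of the internal (non-leaf) nodes of a full binary tree
(the root has depth 0). -/
def FullBinTree.internalDepths : FullBinTree → Multiset ℕ
  | .leaf => 0
  | .node l r => {0} + (l.internalDepths.map (· + 1)) + (r.internalDepths.map (· + 1))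

/-- The number of leaves of a full binary tree. -/
def FullBinTree.numLeaves : FullBinTree → ℕ
  | .leaf => 1
  | .node l r => l.numLeaves + r.numLeaves

lemma one_le_numLeaves (t : FullBinTree) : 1 ≤ t.numLeaves := by
  induction t with
  | leaf => simp [FullBinTree.numLeaves]
  | node l r hl hr => simp [FullBinTree.numLeaves]; omega

lemma key_ineq {a b : ℝ} (ha : 1 ≤ a) (hb : 1 ≤ b) :
    1 + (Real.logb 2 a + Real.logb 2 b) / 2 ≤ Real.logb 2 (a + b) := by
  have ha0 : (0:ℝ) < a := by linarith
  have hb0 : (0:ℝ) < b := by linarith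
  have hab : a * b ≤ ((a + b) / 2) ^ 2 := by nlinarith [sq_nonneg (a - b)]
  have h1 : Real.logb 2 a + Real.logb 2 b = Real.logb 2 (a * b) := by
    rw [Real.logb_mul ha0.ne' hb0.ne']
  have h2 : Real.logb 2 (a * b) ≤ Real.logb 2 (((a + b) / 2) ^ 2) :=
    Real.logb_le_logb_of_le (by norm_num) (mul_pos ha0 hb0) hab
  have h3 : Real.logb 2 (((a + b) / 2) ^ 2) = 2 * Real.logb 2 ((a + b) / 2) := by
    rw [Real.logb_pow]; ring
  have h4 : Real.logb 2 ((a + b) / 2) = Real.logb 2 (a + b) - 1 := by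
    rw [Real.logb_div (by linarith) (by norm_num)]
    simp [Real.logb_self_eq_one]
  linarith

/-- For every finite full binary tree with `L` leaves, the sum over all internal nodes `v`
of `2^(−depth v)` is at most `log₂ L`. -/
theorem sum_internal_two_pow_neg_depth_le (t : FullBinTree) :
    ((t.internalDepths).map (fun d => ((2 : ℝ) ^ d)⁻¹)).sum ≤
      Real.logb 2 (t.numLeaves) := by
  induction t with
  | leaf => simp [FullBinTree.internalDepths, FullBinTree.numLeaves]
  | node l r hl hr =>
    have hmap : ∀ s : FullBinTree,
        ((s.internalDepths.map (· + 1)).map (fun d => ((2 : ℝ) ^ d)⁻¹)).sum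
          = ((s.internalDepths).map (fun d => ((2 : ℝ) ^ d)⁻¹)).sum / 2 := by
      intro s
      rw [Multiset.map_map]
      have : ((fun d => ((2:ℝ) ^ d)⁻¹) ∘ fun x => x + 1)
          = fun d => ((2:ℝ) ^ d)⁻¹ * (2:ℝ)⁻¹ := by
        funext d; simp [pow_succ, mul_inv]; ring
      rw [this, Multiset.sum_map_mul_right, div_eq_mul_inv]
    have hL := one_le_numLeaves l
    have hR := one_le_numLeaves r
    have hkey := key_ineq (a := (l.numLeaves : ℝ)) (b := (r.numLeaves : ℝ))
      (by exact_mod_cast hL) (by exact_mod_cast hR)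
    simp only [FullBinTree.internalDepths, FullBinTree.numLeaves, Multiset.map_add,
      Multiset.sum_add, Multiset.map_singleton, Multiset.sum_singleton, hmap,
      Nat.cast_add]
    norm_num
    linarith
end

section
/- Let n ≥ 1 and let w be a function from pairs (i,j) with 1 ≤ i,j ≤ n to the extended nonnegative reals [0,∞], with w(i,i) = 0 for all i. Define SP(i,j,0) = w(i,j) and, for 1 ≤ k ≤ n, SP(i,j,k) = min( SP(i,j,k−1), SP(i,k,k−1) + SP(k,j,k−1) ). Define A(i,k) and B(k,j) for 1 ≤ k ≤ n by A(i,1) = w(i,1), B(1,j) = w(1,j), and for k ≥ 2: A(i,k) = min( w(i,k), min over 1 ≤ k' < k of (A(i,k') + B(k',k)) ) and B(k,j) = min( w(k,j), min over 1 ≤ k' < k of (A(k,k') + B(k',j)) ). Then for all 1 ≤ i, j, k ≤ n, A(i,k) = SP(i,k,k−1) and B(k,j) = SP(k,j,k−1). -/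
open scoped ENNReal

/-- Correctness of the write-efficient reformulation of Floyd–Warshall: the row/column
arrays `A` and `B` satisfy `A i k = SP i k (k−1)` and `B k j = SP k j (k−1)`. -/
theorem floyd_warshall_AB_correct (n : ℕ) (hn : 1 ≤ n)
    (w : ℕ → ℕ → ℝ≥0∞) (hw : ∀ i, 1 ≤ i → i ≤ n → w i i = 0)
    (SP : ℕ → ℕ → ℕ → ℝ≥0∞)
    (hSP0 : ∀ i j, 1 ≤ i → i ≤ n → 1 ≤ j → j ≤ n → SP i j 0 = w i j)
    (hSP : ∀ i j k, 1 ≤ i → i ≤ n → 1 ≤ j → j ≤ n → 1 ≤ k → k ≤ n →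
      SP i j k = min (SP i j (k - 1)) (SP i k (k - 1) + SP k j (k - 1)))
    (A B : ℕ → ℕ → ℝ≥0∞)
    (hA1 : ∀ i, 1 ≤ i → i ≤ n → A i 1 = w i 1)
    (hB1 : ∀ j, 1 ≤ j → j ≤ n → B 1 j = w 1 j)
    (hA : ∀ i k, 1 ≤ i → i ≤ n → 2 ≤ k → k ≤ n →
      A i k = min (w i k) ((Finset.Ico 1 k).inf (fun k' => A i k' + B k' k)))
    (hB : ∀ k j, 1 ≤ j → j ≤ n → 2 ≤ k → k ≤ n →
      B k j = min (w k j) ((Finset.Ico 1 k).inf (fun k' => A k k' + B k' j))) :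
    ∀ i j k, 1 ≤ i → i ≤ n → 1 ≤ j → j ≤ n → 1 ≤ k → k ≤ n →
      A i k = SP i k (k - 1) ∧ B k j = SP k j (k - 1) := by
  -- Unrolled form of the SP recurrence
  have key : ∀ m, m ≤ n → ∀ i j, 1 ≤ i → i ≤ n → 1 ≤ j → j ≤ n →
      SP i j m = min (w i j)
        ((Finset.Ico 1 (m + 1)).inf fun k' => SP i k' (k' - 1) + SP k' j (k' - 1)) := by
    intro m
    induction m with
    | zero =>
      intro hm i j hi1 hi2 hj1 hj2
      simp [hSP0 i j hi1 hi2 hj1 hj2]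
    | succ m ih =>
      intro hm i j hi1 hi2 hj1 hj2
      have hm' : m ≤ n := Nat.le_of_succ_le hm
      have hk1 : 1 ≤ m + 1 := Nat.le_add_left 1 m
      rw [hSP i j (m + 1) hi1 hi2 hj1 hj2 hk1 hm]
      simp only [Nat.add_sub_cancel]
      rw [ih hm' i j hi1 hi2 hj1 hj2]
      have hins : Finset.Ico 1 (m + 1 + 1) = insert (m + 1) (Finset.Ico 1 (m + 1)) := by
        rw [Finset.Ico_insert_right hk1]
        rfl
      rw [hins, Finset.inf_insert]
      simp only [Nat.add_sub_cancel]
      rw [min_assoc]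
      congr 1
      exact inf_comm _ _
  -- main strong induction on k
  have main : ∀ k, 1 ≤ k → k ≤ n →
      (∀ i, 1 ≤ i → i ≤ n → A i k = SP i k (k - 1)) ∧
      (∀ j, 1 ≤ j → j ≤ n → B k j = SP k j (k - 1)) := by
    intro k
    induction k using Nat.strong_induction_on with
    | _ k IH =>
      intro hk1 hk2
      rcases eq_or_lt_of_le hk1 with h1 | h2
      · subst h1
        constructor
        · intro i hi1 hi2
          rw [hA1 i hi1 hi2, hSP0 i 1 hi1 hi2 le_rfl hn]
        · intro j hj1 hj2
          rw [hB1 j hj1 hj2, hSP0 1 j le_rfl hn hj1 hj2]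
      · -- k ≥ 2
        have hk2' : 2 ≤ k := h2
        have hkm1 : k - 1 + 1 = k := Nat.succ_pred_eq_of_pos (Nat.lt_of_lt_of_le one_pos hk1)
        have hkm1n : k - 1 ≤ n := le_trans (Nat.sub_le k 1) hk2
        have hmem : ∀ k' ∈ Finset.Ico 1 k, 1 ≤ k' ∧ k' ≤ n := by
          intro k' hk'
          rw [Finset.mem_Ico] at hk'
          exact ⟨hk'.1, le_trans (Nat.le_of_lt hk'.2) hk2⟩
        constructor
        · intro i hi1 hi2
          rw [hA i k hi1 hi2 hk2' hk2,
            key (k - 1) hkm1n i k hi1 hi2 hk1 hk2, hkm1]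
          congr 1
          apply Finset.inf_congr rfl
          intro k' hk'
          obtain ⟨h1', h2'⟩ := hmem k' hk'
          have hlt : k' < k := (Finset.mem_Ico.mp hk').2
          obtain ⟨hAe, hBe⟩ := IH k' hlt h1' h2'
          rw [hAe i hi1 hi2, hBe k hk1 hk2]
        · intro j hj1 hj2
          rw [hB k j hj1 hj2 hk2' hk2,
            key (k - 1) hkm1n k j hk1 hk2 hj1 hj2, hkm1]
          congr 1
          apply Finset.inf_congr rfl
          intro k' hk'
          obtain ⟨h1', h2'⟩ := hmem k' hk'
          have hlt : k' < k := (Finset.mem_Ico.mp hk').2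
          obtain ⟨hAe, hBe⟩ := IH k' hlt h1' h2'
          rw [hAe k hk1 hk2, hBe j hj1 hj2]
  intro i j k hi1 hi2 hj1 hj2 hk1 hk2
  exact ⟨(main k hk1 hk2).1 i hi1 hi2, (main k hk1 hk2).2 j hj1 hj2⟩
end

section
/- Let n ≥ 1 and let w be a function from pairs (i,j) with 1 ≤ i,j ≤ n to the extended nonnegative reals [0,∞], with w(i,i) = 0 for all i. Define SP(i,j,0) = w(i,j) and, for 1 ≤ k ≤ n, SP(i,j,k) = min( SP(i,j,k−1), SP(i,k,k−1) + SP(k,j,k−1) ). Define A(i,k) and B(k,j) for 1 ≤ k ≤ n by A(i,1) = w(i,1), B(1,j) = w(1,j), and for k ≥ 2: A(i,k) = min( w(i,k), min over 1 ≤ k' < k of (A(i,k') + B(k',k)) ) and B(k,j) = min( w(k,j), min over 1 ≤ k' < k of (A(k,k') + B(k',j)) ). Define D(i,j) = min over 1 ≤ k ≤ n of (A(i,k) + B(k,j)). Then for all 1 ≤ i, j ≤ n, D(i,j) = SP(i,j,n). -/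
open scoped ENNReal

/-- Correctness of recovering all-pairs shortest distances from the write-efficient
Floyd–Warshall arrays: `D i j = min over 1 ≤ k ≤ n of (A i k + B k j)` equals
`SP i j n`. -/
theorem floyd_warshall_D_correct (n : ℕ) (hn : 1 ≤ n)
    (w : ℕ → ℕ → ℝ≥0∞) (hw : ∀ i, 1 ≤ i → i ≤ n → w i i = 0)
    (SP : ℕ → ℕ → ℕ → ℝ≥0∞)
    (hSP0 : ∀ i j, 1 ≤ i → i ≤ n → 1 ≤ j → j ≤ n → SP i j 0 = w i j)
    (hSP : ∀ i j k, 1 ≤ i → i ≤ n → 1 ≤ j → j ≤ n → 1 ≤ k → k ≤ n →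
      SP i j k = min (SP i j (k - 1)) (SP i k (k - 1) + SP k j (k - 1)))
    (A B : ℕ → ℕ → ℝ≥0∞)
    (hA1 : ∀ i, 1 ≤ i → i ≤ n → A i 1 = w i 1)
    (hB1 : ∀ j, 1 ≤ j → j ≤ n → B 1 j = w 1 j)
    (hA : ∀ i k, 1 ≤ i → i ≤ n → 2 ≤ k → k ≤ n →
      A i k = min (w i k) ((Finset.Ico 1 k).inf (fun k' => A i k' + B k' k)))
    (hB : ∀ k j, 1 ≤ j → j ≤ n → 2 ≤ k → k ≤ n →
      B k j = min (w k j) ((Finset.Ico 1 k).inf (fun k' => A k k' + B k' j)))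
    (D : ℕ → ℕ → ℝ≥0∞)
    (hD : ∀ i j, 1 ≤ i → i ≤ n → 1 ≤ j → j ≤ n →
      D i j = (Finset.Icc 1 n).inf (fun k => A i k + B k j)) :
    ∀ i j, 1 ≤ i → i ≤ n → 1 ≤ j → j ≤ n → D i j = SP i j n := by
  -- Unfolding lemma for SP
  have L1 : ∀ m, m ≤ n → ∀ i j, 1 ≤ i → i ≤ n → 1 ≤ j → j ≤ n →
      SP i j m = min (w i j)
        ((Finset.Ico 1 (m+1)).inf (fun k' => SP i k' (k'-1) + SP k' j (k'-1))) := by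
    intro m
    induction m with
    | zero =>
      intro _ i j hi1 hi2 hj1 hj2
      simp [hSP0 i j hi1 hi2 hj1 hj2]
    | succ m ih =>
      intro hm i j hi1 hi2 hj1 hj2
      have hm' : m ≤ n := Nat.le_of_succ_le hm
      have h1 : SP i j (m+1) = min (SP i j m) (SP i (m+1) m + SP (m+1) j m) := by
        have := hSP i j (m+1) hi1 hi2 hj1 hj2 (Nat.succ_le_succ (Nat.zero_le m)) hm
        simpa using this
      rw [h1, ih hm' i j hi1 hi2 hj1 hj2,
        Nat.Ico_succ_right_eq_insert_Ico (Nat.succ_le_succ (Nat.zero_le m)),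
        Finset.inf_insert]
      rw [inf_assoc, inf_comm ((Finset.Ico 1 (m+1)).inf _)]
      simp [Nat.succ_eq_add_one]
  -- A and B compute SP
  have L2 : ∀ k, 1 ≤ k → k ≤ n →
      (∀ i, 1 ≤ i → i ≤ n → A i k = SP i k (k-1)) ∧
      (∀ j, 1 ≤ j → j ≤ n → B k j = SP k j (k-1)) := by
    intro k
    induction k using Nat.strong_induction_on with
    | _ k IH =>
      intro hk1 hkn
      rcases eq_or_lt_of_le hk1 with h1 | h2
      · subst h1
        constructor
        · intro i hi1 hi2
          rw [hA1 i hi1 hi2]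
          exact (hSP0 i 1 hi1 hi2 le_rfl hn).symm
        · intro j hj1 hj2
          rw [hB1 j hj1 hj2]
          exact (hSP0 1 j le_rfl hn hj1 hj2).symm
      · have hk2 : 2 ≤ k := h2
        have hkm : k - 1 ≤ n := le_trans (Nat.sub_le k 1) hkn
        have hks : (k - 1) + 1 = k := Nat.succ_pred_eq_of_pos hk1
        constructor
        · intro i hi1 hi2
          rw [hA i k hi1 hi2 hk2 hkn, L1 (k-1) hkm i k hi1 hi2 hk1 hkn, hks]
          congr 1
          apply Finset.inf_congr rfl
          intro k' hk'
          rw [Finset.mem_Ico] at hk'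
          have hk'n : k' ≤ n := le_trans (Nat.le_of_lt hk'.2) hkn
          rw [(IH k' hk'.2 hk'.1 hk'n).1 i hi1 hi2,
            (IH k' hk'.2 hk'.1 hk'n).2 k hk1 hkn]
        · intro j hj1 hj2
          rw [hB k j hj1 hj2 hk2 hkn, L1 (k-1) hkm k j hk1 hkn hj1 hj2, hks]
          congr 1
          apply Finset.inf_congr rfl
          intro k' hk'
          rw [Finset.mem_Ico] at hk'
          have hk'n : k' ≤ n := le_trans (Nat.le_of_lt hk'.2) hkn
          rw [(IH k' hk'.2 hk'.1 hk'n).1 k hk1 hkn,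
            (IH k' hk'.2 hk'.1 hk'n).2 j hj1 hj2]
  -- main
  intro i j hi1 hi2 hj1 hj2
  have hIcc : Finset.Icc 1 n = Finset.Ico 1 (n+1) := (Finset.Ico_add_one_right_eq_Icc 1 n).symm
  have hDinf : D i j =
      (Finset.Ico 1 (n+1)).inf (fun k => SP i k (k-1) + SP k j (k-1)) := by
    rw [hD i j hi1 hi2 hj1 hj2, hIcc]
    apply Finset.inf_congr rfl
    intro k hk
    rw [Finset.mem_Ico] at hk
    have hkn : k ≤ n := Nat.lt_succ_iff.mp hk.2
    rw [(L2 k hk.1 hkn).1 i hi1 hi2, (L2 k hk.1 hkn).2 j hj1 hj2]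
  -- SP j j (j-1) = 0
  have hdiag : ∀ m, m ≤ n → SP j j m = 0 := by
    intro m
    induction m with
    | zero => intro _; rw [hSP0 j j hj1 hj2 hj1 hj2]; exact hw j hj1 hj2
    | succ m ih =>
      intro hm
      have hm' : m ≤ n := Nat.le_of_succ_le hm
      have := hSP j j (m+1) hj1 hj2 hj1 hj2 (Nat.succ_le_succ (Nat.zero_le m)) hm
      simp only [Nat.add_sub_cancel] at this
      rw [this, ih hm']
      simp
  have hmono : SP i j (j-1) ≤ w i j := by
    rw [L1 (j-1) (le_trans (Nat.sub_le j 1) hj2) i j hi1 hi2 hj1 hj2]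
    exact min_le_left _ _
  have hle : (Finset.Ico 1 (n+1)).inf (fun k => SP i k (k-1) + SP k j (k-1)) ≤ w i j := by
    have hjmem : j ∈ Finset.Ico 1 (n+1) := by
      rw [Finset.mem_Ico]; exact ⟨hj1, Nat.lt_succ_of_le hj2⟩
    calc (Finset.Ico 1 (n+1)).inf (fun k => SP i k (k-1) + SP k j (k-1))
        ≤ SP i j (j-1) + SP j j (j-1) := Finset.inf_le hjmem
      _ = SP i j (j-1) := by
          rw [hdiag (j-1) (le_trans (Nat.sub_le j 1) hj2), add_zero]
      _ ≤ w i j := hmono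
  rw [hDinf, L1 n le_rfl i j hi1 hi2 hj1 hj2, min_eq_right hle]
end
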